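/- arXiv:2602.05395 — 3 statements merged into one kernel-verified Lean document; each statement's English description precedes it below -/
import Mathlib

section
/- For all real numbers p_1, p_2 with 0 < p_2 < p_1 < 1 and p_1 + p_2 < 1, the Bernoulli KL divergence satisfies D(p_1 ‖ p_2) < (p_1 − p_2) · log(p_1/p_2), where D(p_1 ‖ p_2) = p_1 log(p_1/p_2) + (1 − p_1) log((1 − p_1)/(1 − p_2)). -/
/-!
The difference between the two sides is `klGap p₁ p₂`, where
`klGap p x = x log (x / p) + (1 - p) log ((1 - x) / (1 - p))`. As a function of `x` it vanishes
at both `x = p` and `x = 1 - p`, and it is strictly decreasing on `(0, min p (1 - p)]`;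
since `p₂ < min p₁ (1 - p₁)`, this gives `klGap p₁ p₂ > 0`.
-/

open Real Set

noncomputable def klGap (p x : ℝ) : ℝ := x * log (x / p) + (1 - p) * log ((1 - x) / (1 - p))

lemma klGap_self (p : ℝ) : klGap p p = 0 := by
  simp [klGap]

lemma klGap_one_sub (p : ℝ) : klGap p (1 - p) = 0 := by
  rw [klGap, sub_sub_cancel, ← inv_div p, log_inv]
  ring

lemma hasDerivAt_klGap {p x : ℝ} (hp : p ≠ 0) (hp1 : p ≠ 1) (hx : x ≠ 0) (hx1 : x ≠ 1) :
    HasDerivAt (klGap p) (log (x / p) + 1 - (1 - p) / (1 - x)) x := by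
  have hp1' : 1 - p ≠ 0 := sub_ne_zero.mpr hp1.symm
  have hx1' : 1 - x ≠ 0 := sub_ne_zero.mpr hx1.symm
  have h := ((hasDerivAt_id' x).mul (((hasDerivAt_id' x).div_const p).log
    (div_ne_zero hx hp))).add
    (((((hasDerivAt_id' x).const_sub 1).div_const (1 - p)).log
      (div_ne_zero hx1' hp1')).const_mul (1 - p))
  refine h.congr_deriv ?_
  field_simp
  ring

/-- `log (x / p) < x / p - 1`, and `x / p < (1 - p) / (1 - x)` because
`p (1 - p) - x (1 - x) = (p - x) (1 - p - x)`. -/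
lemma klGap_deriv_neg {p x : ℝ} (hx : 0 < x) (hxp : x < p) (hxp1 : x < 1 - p) :
    log (x / p) + 1 - (1 - p) / (1 - x) < 0 := by
  have hp : 0 < p := hx.trans hxp
  have hx1 : 0 < 1 - x := by linarith
  have hlog : log (x / p) < x / p - 1 :=
    log_lt_sub_one_of_pos (div_pos hx hp) ((div_lt_one hp).mpr hxp).ne
  have hratio : x / p < (1 - p) / (1 - x) := by
    rw [div_lt_div_iff₀ hp hx1]
    nlinarith [mul_pos (sub_pos.mpr hxp) (sub_pos.mpr hxp1)]
  linarith

lemma klGap_strictAntiOn {p a : ℝ} (ha : 0 < a) :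
    StrictAntiOn (klGap p) (Icc a (min p (1 - p))) := by
  have hderiv : ∀ x ∈ Icc a (min p (1 - p)),
      HasDerivAt (klGap p) (log (x / p) + 1 - (1 - p) / (1 - x)) x := by
    rintro x ⟨hax, hxc⟩
    have hxp := hxc.trans (min_le_left _ _)
    have hxp1 := hxc.trans (min_le_right _ _)
    exact hasDerivAt_klGap (by linarith) (by linarith) (by linarith) (by linarith)
  refine strictAntiOn_of_hasDerivWithinAt_neg (convex_Icc _ _)
    (fun x hx ↦ (hderiv x hx).continuousAt.continuousWithinAt)
    (fun x hx ↦ (hderiv x (interior_subset hx)).hasDerivWithinAt) ?_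
  rw [interior_Icc]
  rintro x ⟨hax, hxc⟩
  exact klGap_deriv_neg (ha.trans hax) (hxc.trans_le (min_le_left _ _))
    (hxc.trans_le (min_le_right _ _))

lemma klGap_pos {p x : ℝ} (hx : 0 < x) (hxp : x < p) (hxp1 : x < 1 - p) : 0 < klGap p x := by
  have hxc : x < min p (1 - p) := lt_min hxp hxp1
  have hc : klGap p (min p (1 - p)) = 0 := by
    rcases min_choice p (1 - p) with h | h <;> rw [h]
    exacts [klGap_self p, klGap_one_sub p]
  rw [← hc]
  exact klGap_strictAntiOn hx (left_mem_Icc.mpr hxc.le) (right_mem_Icc.mpr hxc.le) hxc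

theorem stmt_2_general (p₁ p₂ : ℝ) (h2 : 0 < p₂) (h21 : p₂ < p₁)
    (hsum : p₁ + p₂ < 1) :
    p₁ * Real.log (p₁ / p₂) + (1 - p₁) * Real.log ((1 - p₁) / (1 - p₂)) <
      (p₁ - p₂) * Real.log (p₁ / p₂) := by
  have hgap := klGap_pos h2 h21 (by linarith)
  rw [klGap, ← inv_div p₁, ← inv_div (1 - p₁), log_inv, log_inv] at hgap
  linarith

/-- `D(p₁ ‖ p₂) < (p₁ − p₂) log(p₁/p₂)` for `0 < p₂ < p₁ < 1`, `p₁+p₂ < 1`. -/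
theorem stmt_2 (p₁ p₂ : ℝ) (h2 : 0 < p₂) (h21 : p₂ < p₁) (h1 : p₁ < 1)
    (hsum : p₁ + p₂ < 1) :
    p₁ * Real.log (p₁ / p₂) + (1 - p₁) * Real.log ((1 - p₁) / (1 - p₂)) <
      (p₁ - p₂) * Real.log (p₁ / p₂) :=
  stmt_2_general p₁ p₂ h2 h21 hsum
end

section
/- For all real numbers p_1, p_2 with 0 < p_2 < p_1 < 1 and p_1 + p_2 < 1, one has p_1 · log(2p_1/(p_1+p_2)) + p_2 · log(2p_2/(p_1+p_2)) < D(p_1 ‖ p_2), where D(p_1 ‖ p_2) = p_1 log(p_1/p_2) + (1−p_1) log((1−p_1)/(1−p_2)). -/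
open Real

/-- the prior-free exponent is strictly smaller than the Bernoulli KL
divergence `D(p₁ ‖ p₂)` for `0 < p₂ < p₁ < 1`, `p₁+p₂ < 1`. -/
theorem stmt_3 (p₁ p₂ : ℝ) (h2 : 0 < p₂) (h21 : p₂ < p₁) (h1 : p₁ < 1)
    (hsum : p₁ + p₂ < 1) :
    p₁ * Real.log (2 * p₁ / (p₁ + p₂)) + p₂ * Real.log (2 * p₂ / (p₁ + p₂)) <
      p₁ * Real.log (p₁ / p₂) + (1 - p₁) * Real.log ((1 - p₁) / (1 - p₂)) := by
  have hp1 : 0 < p₁ := lt_trans h2 h21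
  have hs : 0 < p₁ + p₂ := by linarith
  have h1' : 0 < 1 - p₁ := by linarith
  have h2' : 0 < 1 - p₂ := by linarith
  have F1 : Real.log (2 * p₂ / (p₁ + p₂)) < 2 * p₂ / (p₁ + p₂) - 1 := by
    apply Real.log_lt_sub_one_of_pos (by positivity)
    intro h
    rw [div_eq_one_iff_eq hs.ne'] at h
    linarith
  have F2 : Real.log ((1 - p₂) / (1 - p₁)) < (1 - p₂) / (1 - p₁) - 1 := by
    apply Real.log_lt_sub_one_of_pos (by positivity)
    intro h
    rw [div_eq_one_iff_eq h1'.ne'] at h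
    linarith
  have c1 : (p₁ + p₂) * (2 * p₂ / (p₁ + p₂)) = 2 * p₂ := by field_simp
  have c2 : (1 - p₁) * ((1 - p₂) / (1 - p₁)) = 1 - p₂ := by field_simp
  have F1' : (p₁ + p₂) * Real.log (2 * p₂ / (p₁ + p₂)) < p₂ - p₁ := by
    have := mul_lt_mul_of_pos_left F1 hs
    rw [mul_sub, c1, mul_one] at this
    linarith
  have F2' : (1 - p₁) * Real.log ((1 - p₂) / (1 - p₁)) < p₁ - p₂ := by
    have := mul_lt_mul_of_pos_left F2 h1'
    rw [mul_sub, c2, mul_one] at this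
    linarith
  have e1 : Real.log (2 * p₁ / (p₁ + p₂))
      = Real.log 2 + Real.log p₁ - Real.log (p₁ + p₂) := by
    rw [Real.log_div (by positivity) hs.ne', Real.log_mul two_ne_zero hp1.ne']
  have e2 : Real.log (2 * p₂ / (p₁ + p₂))
      = Real.log 2 + Real.log p₂ - Real.log (p₁ + p₂) := by
    rw [Real.log_div (by positivity) hs.ne', Real.log_mul two_ne_zero h2.ne']
  have e3 : Real.log (p₁ / p₂) = Real.log p₁ - Real.log p₂ :=
    Real.log_div hp1.ne' h2.ne'
  have e4 : Real.log ((1 - p₁) / (1 - p₂)) = Real.log (1 - p₁) - Real.log (1 - p₂) :=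
    Real.log_div h1'.ne' h2'.ne'
  have e5 : Real.log ((1 - p₂) / (1 - p₁)) = Real.log (1 - p₂) - Real.log (1 - p₁) :=
    Real.log_div h2'.ne' h1'.ne'
  rw [e2] at F1'
  rw [e5] at F2'
  rw [e1, e2, e3, e4]
  linarith
end

section
/- Let p_1 ≥ p_2 ≥ … ≥ p_K > 0, let n, n_1 be integers with 0 ≤ n_1 ≤ n, and for each i ∈ {1,…,K} define S_i = (n−n_1)! · [z^{n−n_1}] ∏_{j≠i} T(p_j z), where T(x) = Σ_{r=0}^{u} x^r/r! with u = min(n_1, n−n_1). Then for every i < K: S_i ≤ S_{i+1} ≤ (p_i/p_{i+1})^{n_1} · S_i. -/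
/-!
Put `m = n - n₁` and let `Q` be the product of the factors `T(p_l z)` with `l ∉ {i, i+1}`.
Then `S_i = m! [z^m] T(p_{i+1} z) Q` and `S_{i+1} = m! [z^m] T(p_i z) Q`. Since `Q` has
nonnegative coefficients, coefficientwise inequalities between the two `T` factors pass to the
products: `p_{i+1} ≤ p_i` gives the first inequality, and
`p_i^k = (p_i/p_{i+1})^k p_{i+1}^k ≤ (p_i/p_{i+1})^{n₁} p_{i+1}^k` for `k ≤ u ≤ n₁` the second.
-/

open Polynomial Finset

section CoeffNonneg

variable {R : Type*} [CommSemiring R] [PartialOrder R] [IsOrderedRing R]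

lemma coeff_mul_nonneg {P Q : R[X]} (hP : ∀ k, 0 ≤ P.coeff k) (hQ : ∀ k, 0 ≤ Q.coeff k)
    (m : ℕ) : 0 ≤ (P * Q).coeff m := by
  rw [coeff_mul]
  exact sum_nonneg fun x _ => mul_nonneg (hP x.1) (hQ x.2)

lemma coeff_prod_nonneg {ι : Type*} (s : Finset ι) (f : ι → R[X])
    (hf : ∀ j ∈ s, ∀ k, 0 ≤ (f j).coeff k) (m : ℕ) : 0 ≤ (∏ j ∈ s, f j).coeff m :=
  prod_induction f (fun P => ∀ k, 0 ≤ P.coeff k) (fun _ _ => coeff_mul_nonneg)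
    (fun k => by rw [coeff_one]; split <;> simp) hf m

lemma coeff_mul_le_coeff_mul {P P' Q : R[X]} (hQ : ∀ k, 0 ≤ Q.coeff k)
    (h : ∀ k, P.coeff k ≤ P'.coeff k) (m : ℕ) : (P * Q).coeff m ≤ (P' * Q).coeff m := by
  rw [coeff_mul, coeff_mul]
  exact sum_le_sum fun x _ => mul_le_mul_of_nonneg_right (h x.1) (hQ x.2)

end CoeffNonneg

section TruncExp

variable {𝕜 : Type*} [Field 𝕜]

/-- The paper's `T(a z)`: the exponential series of `a z` truncated after degree `u`. -/
noncomputable def truncExp (u : ℕ) (a : 𝕜) : 𝕜[X] :=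
  ∑ r ∈ range (u + 1), C (a ^ r / r.factorial) * X ^ r

lemma coeff_truncExp (u : ℕ) (a : 𝕜) (k : ℕ) :
    (truncExp u a).coeff k = if k ≤ u then a ^ k / k.factorial else 0 := by
  simp only [truncExp, finsetSum_coeff, coeff_C_mul, coeff_X_pow, mul_ite, mul_one, mul_zero,
    sum_ite_eq, mem_range, Nat.lt_succ_iff]

variable [LinearOrder 𝕜] [IsStrictOrderedRing 𝕜]

lemma coeff_truncExp_nonneg (u : ℕ) {a : 𝕜} (ha : 0 ≤ a) (k : ℕ) :
    0 ≤ (truncExp u a).coeff k := by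
  rw [coeff_truncExp]
  split <;> positivity

lemma coeff_truncExp_mono (u : ℕ) {a b : 𝕜} (hb : 0 ≤ b) (hba : b ≤ a) (k : ℕ) :
    (truncExp u b).coeff k ≤ (truncExp u a).coeff k := by
  rw [coeff_truncExp, coeff_truncExp]
  split
  · gcongr
  · rfl

lemma coeff_truncExp_le_coeff_C_mul {u N : ℕ} (huN : u ≤ N) {a b : 𝕜} (hb : 0 < b)
    (hba : b ≤ a) (k : ℕ) :
    (truncExp u a).coeff k ≤ (C ((a / b) ^ N) * truncExp u b).coeff k := by
  rw [coeff_C_mul, coeff_truncExp, coeff_truncExp]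
  split_ifs with hku
  · have hpow : (a / b) ^ k ≤ (a / b) ^ N :=
      pow_le_pow_right₀ ((one_le_div hb).2 hba) (hku.trans huN)
    calc a ^ k / k.factorial = (a / b) ^ k * (b ^ k / k.factorial) := by
          rw [div_pow, ← mul_div_assoc, div_mul_cancel₀ _ (pow_ne_zero _ hb.ne')]
      _ ≤ (a / b) ^ N * (b ^ k / k.factorial) := by gcongr
  · simp

end TruncExp

theorem stmt_6_general (K n n₁ : ℕ)
    (p : Fin K → ℝ) (hpos : ∀ i, 0 < p i)
    (hmono : ∀ i j : Fin K, i ≤ j → p j ≤ p i)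
    (S : Fin K → ℝ)
    (hS : ∀ i, S i = ((n - n₁).factorial : ℝ) *
      (∏ j ∈ Finset.univ.erase i,
        (∑ r ∈ Finset.range (min n₁ (n - n₁) + 1),
          Polynomial.C ((p j) ^ r / (r.factorial : ℝ)) * Polynomial.X ^ r :
            Polynomial ℝ)).coeff (n - n₁))
    (i : Fin K) (h : i.val + 1 < K) :
    S i ≤ S ⟨i.val + 1, h⟩ ∧
      S ⟨i.val + 1, h⟩ ≤ (p i / p ⟨i.val + 1, h⟩) ^ n₁ * S i := by
  set j : Fin K := ⟨i.val + 1, h⟩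
  set u := min n₁ (n - n₁)
  set Q := ∏ l ∈ (univ.erase i).erase j, truncExp u (p l)
  have hS' : ∀ l, S l =
      (n - n₁).factorial * (∏ k ∈ univ.erase l, truncExp u (p k)).coeff (n - n₁) := hS
  have hij : i ≠ j := Fin.ne_of_lt (Nat.lt_succ_self _)
  have hSi : S i = (n - n₁).factorial * (truncExp u (p j) * Q).coeff (n - n₁) := by
    rw [hS', ← mul_prod_erase _ (fun l => truncExp u (p l)) (mem_erase.2 ⟨hij.symm, mem_univ j⟩)]
  have hSj : S j = (n - n₁).factorial * (truncExp u (p i) * Q).coeff (n - n₁) := by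
    rw [hS', ← mul_prod_erase _ (fun l => truncExp u (p l)) (mem_erase.2 ⟨hij, mem_univ i⟩),
      erase_right_comm]
  have hQ : ∀ k, 0 ≤ Q.coeff k :=
    coeff_prod_nonneg _ _ fun l _ => coeff_truncExp_nonneg u (hpos l).le
  have hji : p j ≤ p i := hmono i j (Nat.le_succ _)
  rw [hSi, hSj]
  constructor
  · gcongr
    exact coeff_mul_le_coeff_mul hQ (coeff_truncExp_mono u (hpos j).le hji) _
  · have hratio := coeff_mul_le_coeff_mul hQ
      (coeff_truncExp_le_coeff_C_mul (min_le_left n₁ (n - n₁)) (hpos j) hji) (n - n₁)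
    rw [mul_assoc, coeff_C_mul] at hratio
    rw [mul_left_comm]
    gcongr

/-- monotonicity and ratio bound for the tail-aggregation constants
`S_i = (n−n₁)! · [z^{n−n₁}] ∏_{j≠i} T(p_j z)` with `T` truncated at `u = min(n₁, n−n₁)`. -/
theorem stmt_6 (K n n₁ : ℕ) (hK : 0 < K) (hn₁ : n₁ ≤ n)
    (p : Fin K → ℝ) (hpos : ∀ i, 0 < p i)
    (hmono : ∀ i j : Fin K, i ≤ j → p j ≤ p i)
    (S : Fin K → ℝ)
    (hS : ∀ i, S i = ((n - n₁).factorial : ℝ) *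
      (∏ j ∈ Finset.univ.erase i,
        (∑ r ∈ Finset.range (min n₁ (n - n₁) + 1),
          Polynomial.C ((p j) ^ r / (r.factorial : ℝ)) * Polynomial.X ^ r :
            Polynomial ℝ)).coeff (n - n₁))
    (i : Fin K) (h : i.val + 1 < K) :
    S i ≤ S ⟨i.val + 1, h⟩ ∧
      S ⟨i.val + 1, h⟩ ≤ (p i / p ⟨i.val + 1, h⟩) ^ n₁ * S i :=
  stmt_6_general K n n₁ p hpos hmono S hS i h
end
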